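/- arXiv:1910.12490 — 5 statements merged into one kernel-verified Lean document; each statement's English description precedes it below -/
import Mathlib

section
/- Let A and B be n×k matrices with entries in {0,1} (viewed as integers). Suppose every one of the k standard basis vectors e_1, …, e_k of length k occurs as a row of A. If A·Aᵀ = B·Bᵀ, then there exists a k×k permutation matrix P such that B = A·P. -/
/-!
Choose for each `j` a row `r j` of `A` equal to `e_j`. Column `r j` of `A * Aᵀ` is column `j`
of `A`; in particular `(A * Aᵀ) (r j) (r j) = 1`, so the 0/1 row `B (r j)` has exactly one
nonzero entry, say at `τ j`, and column `r j` of `B * Bᵀ` is column `τ j` of `B`. Comparing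
columns gives `A i j = B i (τ j)`, and `τ` is injective because the columns of `A` are distinct.
-/

open Matrix Finset

namespace Matrix

variable {ι κ R : Type*} [DecidableEq κ]

theorem mul_transpose_apply_of_row_eq_single [Fintype κ] [NonAssocSemiring R] {ι' : Type*}
    (N : Matrix ι κ R) {M : Matrix ι' κ R} {i' : ι'} {j : κ} (hM : M i' = Pi.single j 1)
    (i : ι) : (N * Mᵀ) i i' = N i j := by
  simp [mul_apply, hM, Pi.single_apply]

theorem transpose_injective_of_forall_exists_row_eq_single [Semiring R] [Nontrivial R]
    {M : Matrix ι κ R} (hM : ∀ j, ∃ i, M i = Pi.single j 1) : Function.Injective Mᵀ := by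
  intro j j' h
  obtain ⟨i, hi⟩ := hM j
  have := congrFun h i
  simp only [transpose_apply, hi, Pi.single_eq_same] at this
  by_contra hne
  simp [Pi.single_eq_of_ne' hne] at this

theorem mul_of_perm_eq_submatrix [Fintype κ] [NonAssocSemiring R] (A : Matrix ι κ R)
    (σ : Equiv.Perm κ) :
    A * of (fun i j => if σ i = j then (1 : R) else 0) = A.submatrix id σ.symm := by
  have hP : of (fun i j => if σ i = j then (1 : R) else 0) =
      (1 : Matrix κ κ R).submatrix σ id := by
    ext i j; simp [one_apply]
  rw [hP, mul_submatrix_one]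
  rfl

end Matrix

theorem exists_eq_single_of_dotProduct_self_eq_one {κ R : Type*} [Fintype κ] [DecidableEq κ]
    [NonAssocSemiring R] [CharZero R] {v : κ → R} (h01 : ∀ m, v m = 0 ∨ v m = 1)
    (hv : v ⬝ᵥ v = 1) : ∃ m, v = Pi.single m 1 := by
  classical
  have hsq : ∀ m, v m * v m = if v m = 1 then 1 else 0 := by
    intro m; rcases h01 m with h | h <;> simp [h]
  have hcard : #{m | v m = 1} = 1 := by
    rw [dotProduct, Finset.sum_congr rfl fun m _ => hsq m, Finset.sum_boole] at hv
    exact_mod_cast hv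
  obtain ⟨m, hm⟩ := Finset.card_eq_one.mp hcard
  refine ⟨m, funext fun m' => ?_⟩
  have := Finset.ext_iff.mp hm m'
  simp only [Finset.mem_filter, Finset.mem_univ, true_and, Finset.mem_singleton] at this
  rcases h01 m' with h | h
  · rw [h, Pi.single_apply, if_neg]; intro e; simp [this.mpr e] at h
  · rw [h, this.mp h, Pi.single_eq_same]

theorem stmt_1_general (n k : ℕ)
    (A B : Matrix (Fin n) (Fin k) ℤ)
    (hB01 : ∀ i j, B i j = 0 ∨ B i j = 1)
    (hbasis : ∀ j : Fin k, ∃ i : Fin n, A i = fun j' => if j' = j then 1 else 0)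
    (hGram : A * Aᵀ = B * Bᵀ) :
    ∃ σ : Equiv.Perm (Fin k),
      B = A * Matrix.of (fun i j => if σ i = j then (1 : ℤ) else 0) := by
  have hbasis : ∀ j, ∃ i, A i = Pi.single j 1 := fun j => by
    simpa only [funext_iff, Pi.single_apply] using hbasis j
  choose r hr using hbasis
  have hGram_r : ∀ i j, (B * Bᵀ) i (r j) = A i j := fun i j => by
    rw [← hGram, mul_transpose_apply_of_row_eq_single A (hr j)]
  have hBr : ∀ j, ∃ m, B (r j) = Pi.single m 1 := fun j =>
    exists_eq_single_of_dotProduct_self_eq_one (hB01 (r j)) <|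
      (hGram_r (r j) j).trans (by rw [hr j, Pi.single_eq_same])
  choose τ hτ using hBr
  have hAB : ∀ i j, A i j = B i (τ j) := fun i j => by
    rw [← hGram_r, mul_transpose_apply_of_row_eq_single B (hτ j)]
  have hτ_inj : Function.Injective τ := by
    have hcols : Bᵀ ∘ τ = Aᵀ := funext fun j => funext fun i => (hAB i j).symm
    refine .of_comp (f := Bᵀ) ?_
    rw [hcols]
    exact transpose_injective_of_forall_exists_row_eq_single fun j => ⟨r j, hr j⟩
  refine ⟨Equiv.ofBijective τ hτ_inj.bijective_of_finite, ?_⟩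
  ext i j
  rw [mul_of_perm_eq_submatrix, submatrix_apply, hAB, id, Equiv.ofBijective_apply_symm_apply τ]

/-- deterministic core of Lemma 2 (i.i.d.-ensemble uniqueness of the
factorization `A * Aᵀ`). -/
theorem stmt_1 (n k : ℕ)
    (A B : Matrix (Fin n) (Fin k) ℤ)
    (hA01 : ∀ i j, A i j = 0 ∨ A i j = 1)
    (hB01 : ∀ i j, B i j = 0 ∨ B i j = 1)
    (hbasis : ∀ j : Fin k, ∃ i : Fin n, A i = fun j' => if j' = j then 1 else 0)
    (hGram : A * Aᵀ = B * Bᵀ) :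
    ∃ σ : Equiv.Perm (Fin k),
      B = A * Matrix.of (fun i j => if σ i = j then (1 : ℤ) else 0) :=
  stmt_1_general n k A B hB01 hbasis hGram
end

section
/- Let 0 < p < 1, let α = max(p, 1−p), and let m ≥ k ≥ 1. Let B be a random m×k matrix over the field GF(2) whose entries are independent, each equal to 1 with probability p. Then the probability that B has rank k over GF(2) is at least the product over ℓ from m−k+1 to m of (1 − α^ℓ). -/
/-!
Reveal the columns one at a time. If the first `n` columns are linearly independent they span a
subspace `W` of dimension `n`, and adding the next column keeps independence unless that column
lies in `W`. A `d`-dimensional subspace of `K^m` projects injectively onto some `d` coordinates,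
so a vector of `W` is determined by them, and each of the other `m - d` coordinates then takes
its forced value with probability at most `α`; hence `W` has probability at most `α ^ (m - d)`.
Multiplying the bounds `1 - α ^ (m - n)` for `n < k` gives the claim.
-/

open Finset Matrix Module Submodule
open scoped Classical

theorem Submodule.exists_card_le_finrank_injOn_restrict {K ι : Type*} [Field K] [Fintype ι]
    (W : Submodule K (ι → K)) :
    ∃ S : Finset ι, S.card ≤ finrank K W ∧ Set.InjOn (fun (v : ι → K) (i : S) => v i) W := by
  -- The coordinate functionals span `Dual K W`, so `finrank K W` of them already separate points.
  let φ : ι → Dual K W := W.subtype.dualMap ∘ (Pi.basisFun K ι).dualBasis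
  have hφ : ∀ i (v : W), φ i v = (v : ι → K) i := fun i v => by simp [φ]
  have hspan : span K (Set.range φ) = ⊤ := by
    rw [Set.range_comp, span_image, Basis.span_eq, map_top, LinearMap.range_eq_top]
    exact LinearMap.dualMap_surjective_of_injective W.injective_subtype
  obtain ⟨κ, a, ha, hspan_a, hli⟩ := exists_linearIndependent' K φ
  have : Finite κ := Finite.of_injective a ha
  have := Fintype.ofFinite κ
  refine ⟨univ.map ⟨a, ha⟩, ?_, fun u hu v hv huv => ?_⟩
  · rw [card_map, card_univ, ← Subspace.dual_finrank_eq]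
    exact hli.fintype_card_le_finrank
  · set x : W := ⟨u - v, sub_mem hu hv⟩
    have hx : span K (Set.range (φ ∘ a)) ≤ LinearMap.ker (Dual.eval K W x) :=
      span_le.2 <| Set.range_subset_iff.2 fun j => by
        simpa [hφ, x, sub_eq_zero] using congrFun huv ⟨a j, by simp⟩
    rw [hspan_a, hspan, top_le_iff, LinearMap.ker_eq_top] at hx
    have hx0 : x = 0 := (forall_dual_apply_eq_zero_iff K x).1 fun f => LinearMap.congr_fun hx f
    exact sub_eq_zero.1 (congrArg Subtype.val hx0)

theorem Submodule.sum_mem_prod_le_pow_card_sub_finrank {K ι : Type*} [Field K] [Fintype K]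
    [Fintype ι] [DecidableEq ι]
    {w : K → ℝ} (hw0 : ∀ x, 0 ≤ w x) (hw1 : ∑ x, w x = 1) {α : ℝ} (hwα : ∀ x, w x ≤ α)
    (hα : α ≤ 1) (W : Submodule K (ι → K)) :
    ∑ v with v ∈ W, ∏ i, w (v i) ≤ α ^ (Fintype.card ι - finrank K W) := by
  obtain ⟨S, hS, hinj⟩ := W.exists_card_le_finrank_injOn_restrict
  set β := α ^ (Fintype.card ι - finrank K W)
  have hfactor (v : ι → K) : ∏ i, w (v i) ≤ β * ∏ i : S, w (v i) := by
    rw [← prod_mul_prod_compl S, mul_comm, ← prod_coe_sort S]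
    gcongr
    · exact prod_nonneg fun i _ => hw0 _
    calc ∏ i ∈ Sᶜ, w (v i) ≤ ∏ i ∈ Sᶜ, α := prod_le_prod (fun i _ => hw0 _) fun i _ => hwα _
      _ = α ^ #Sᶜ := prod_const α
      _ ≤ β := pow_le_pow_of_le_one ((hw0 0).trans (hwα 0)) hα (by rw [card_compl]; omega)
  calc ∑ v with v ∈ W, ∏ i, w (v i) ≤ ∑ v with v ∈ W, β * ∏ i : S, w (v i) :=
        sum_le_sum fun v _ => hfactor v
    _ = β * ∑ u ∈ (univ.filter (· ∈ W)).image (fun (v : ι → K) (i : S) => v i), ∏ i, w (u i) := by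
        rw [mul_sum, sum_image fun u hu v hv => hinj (by simpa using hu) (by simpa using hv)]
    _ ≤ β * ∑ u : S → K, ∏ i, w (u i) := by
        gcongr β * ?_
        · exact pow_nonneg ((hw0 0).trans (hwα 0)) _
        exact sum_le_sum_of_subset_of_nonneg (subset_univ _) fun u _ _ =>
          prod_nonneg fun i _ => hw0 _
    _ = β := by rw [← Fintype.prod_sum, hw1, prod_const_one, mul_one]

section LinearIndependence

variable (K : Type*) {V : Type*} [Field K] [AddCommGroup V] [Module K V] [Fintype V]

/-- For a probability weight `μ` on `V`, the probability that `n` independent `μ`-distributed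
vectors are linearly independent. -/
noncomputable def probLinearIndependent (μ : V → ℝ) (n : ℕ) : ℝ :=
  ∑ c : Fin n → V, if LinearIndependent K c then ∏ j, μ (c j) else 0

theorem probLinearIndependent_zero (μ : V → ℝ) : probLinearIndependent K μ 0 = 1 := by
  simp [probLinearIndependent]

theorem probLinearIndependent_succ (μ : V → ℝ) (n : ℕ) :
    probLinearIndependent K μ (n + 1) = ∑ c : Fin n → V,
      if LinearIndependent K c then
        (∑ x with x ∉ span K (Set.range c), μ x) * ∏ j, μ (c j)
      else 0 := by
  rw [probLinearIndependent, ← (Fin.consEquiv fun _ => V).sum_comp, Fintype.sum_prod_type_right]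
  refine sum_congr rfl fun c _ => ?_
  change ∑ x, (if LinearIndependent K (Fin.cons x c : Fin (n + 1) → V) then
    ∏ j, μ ((Fin.cons x c : Fin (n + 1) → V) j) else 0) = _
  simp only [linearIndependent_finCons, Fin.prod_univ_succ, Fin.cons_zero, Fin.cons_succ]
  split_ifs with hc
  · simp [hc, sum_filter, sum_mul]
  · simp [hc]

variable {K}

theorem probLinearIndependent_mul_le_succ {μ : V → ℝ} (hμ0 : ∀ v, 0 ≤ μ v) (hμ1 : ∑ v, μ v = 1)
    {β : ℕ → ℝ} (hβ : ∀ W : Submodule K V, ∑ v with v ∈ W, μ v ≤ β (finrank K W)) (n : ℕ) :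
    probLinearIndependent K μ n * (1 - β n) ≤ probLinearIndependent K μ (n + 1) := by
  rw [probLinearIndependent_succ, probLinearIndependent, sum_mul]
  gcongr with c
  split_ifs with hc
  · have hW := hβ (span K (Set.range c))
    rw [finrank_span_eq_card hc, Fintype.card_fin] at hW
    have hcompl := sum_filter_add_sum_filter_not univ (· ∈ span K (Set.range c)) μ
    rw [mul_comm]
    gcongr
    · exact prod_nonneg fun j _ => hμ0 _
    · linarith
  · rw [zero_mul]

theorem prod_one_sub_le_probLinearIndependent {μ : V → ℝ} (hμ0 : ∀ v, 0 ≤ μ v)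
    (hμ1 : ∑ v, μ v = 1) {β : ℕ → ℝ} (hβ1 : ∀ j, β j ≤ 1)
    (hβ : ∀ W : Submodule K V, ∑ v with v ∈ W, μ v ≤ β (finrank K W)) (n : ℕ) :
    ∏ j ∈ range n, (1 - β j) ≤ probLinearIndependent K μ n := by
  induction n with
  | zero => simp [probLinearIndependent_zero]
  | succ n ih =>
    rw [prod_range_succ]
    exact (mul_le_mul_of_nonneg_right ih (sub_nonneg.2 (hβ1 n))).trans
      (probLinearIndependent_mul_le_succ hμ0 hμ1 hβ n)

end LinearIndependence

theorem Matrix.rank_eq_card_width_iff_linearIndependent_col {K m n : Type*} [Field K] [Fintype n]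
    (A : Matrix m n K) : A.rank = Fintype.card n ↔ LinearIndependent K A.col := by
  rw [rank_eq_finrank_span_cols, linearIndependent_iff_card_eq_finrank_span, Set.finrank, eq_comm]

theorem sum_rank_eq_eq_probLinearIndependent {K m : Type*} [Field K] [Fintype K] [Fintype m]
    [DecidableEq m]
    (w : K → ℝ) (k : ℕ) :
    ∑ B : m → Fin k → K, (if (Matrix.of B).rank = k then ∏ i, ∏ j, w (B i j) else 0) =
      probLinearIndependent K (fun v : m → K => ∏ i, w (v i)) k := by
  rw [probLinearIndependent, ← (Equiv.piComm _).sum_comp]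
  refine sum_congr rfl fun B _ => ?_
  have hrank := (Matrix.of ((Equiv.piComm _) B)).rank_eq_card_width_iff_linearIndependent_col
  rw [Fintype.card_fin] at hrank
  exact if_congr hrank prod_comm rfl

theorem stmt_7_general (m k : ℕ) (hmk : k ≤ m)
    (p : ℝ) (hp0 : 0 < p) (hp1 : p < 1) :
    (∑ B : Fin m → Fin k → ZMod 2,
        if (Matrix.of (fun i j => B i j) : Matrix (Fin m) (Fin k) (ZMod 2)).rank = k then
          ∏ i : Fin m, ∏ j : Fin k, (if B i j = 1 then p else 1 - p)
        else 0)
      ≥ ∏ ℓ ∈ Finset.Icc (m - k + 1) m, (1 - (max p (1 - p)) ^ ℓ) := by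
  set α := max p (1 - p)
  let w : ZMod 2 → ℝ := fun x => if x = 1 then p else 1 - p
  have hw0 (x : ZMod 2) : 0 ≤ w x := by dsimp only [w]; split_ifs <;> linarith
  have hw1 : ∑ x, w x = 1 := by
    rw [show ∑ x, w x = w 0 + w 1 from Fin.sum_univ_two w]; simp [w]
  have hwα (x : ZMod 2) : w x ≤ α := by
    dsimp only [w]; split_ifs; exacts [le_max_left _ _, le_max_right _ _]
  have hα1 : α ≤ 1 := max_le hp1.le (by linarith)
  calc ∏ ℓ ∈ Icc (m - k + 1) m, (1 - α ^ ℓ) = ∏ j ∈ range k, (1 - α ^ (m - j)) :=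
        prod_nbij' (fun ℓ => m - ℓ) (fun j => m - j) (by simp; omega) (by simp; omega)
          (by simp; omega) (by simp; omega) fun ℓ hℓ => by rw [Nat.sub_sub_self (mem_Icc.1 hℓ).2]
    _ ≤ probLinearIndependent (ZMod 2) (fun v : Fin m → ZMod 2 => ∏ i, w (v i)) k :=
      prod_one_sub_le_probLinearIndependent (fun v => prod_nonneg fun i _ => hw0 _)
        (by rw [← Fintype.prod_sum, hw1, prod_const_one])
        (fun j => pow_le_one₀ ((hw0 0).trans (hwα 0)) hα1)
        (fun W => by simpa using Submodule.sum_mem_prod_le_pow_card_sub_finrank hw0 hw1 hwα hα1 W) k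
    _ = _ := (sum_rank_eq_eq_probLinearIndependent w k).symm

/-- key intermediate bound in the proof of Lemma 4. The entries of the
random `m × k` matrix over `GF(2)` are independent, each equal to `1` with
probability `p`; with `α = max(p, 1-p)`, the matrix has rank `k` over `GF(2)` with
probability at least `∏_{ℓ = m-k+1}^{m} (1 - α^ℓ)`. -/
theorem stmt_7 (m k : ℕ) (hk : 1 ≤ k) (hmk : k ≤ m)
    (p : ℝ) (hp0 : 0 < p) (hp1 : p < 1) :
    (∑ B : Fin m → Fin k → ZMod 2,
        if (Matrix.of (fun i j => B i j) : Matrix (Fin m) (Fin k) (ZMod 2)).rank = k then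
          ∏ i : Fin m, ∏ j : Fin k, (if B i j = 1 then p else 1 - p)
        else 0)
      ≥ ∏ ℓ ∈ Finset.Icc (m - k + 1) m, (1 - (max p (1 - p)) ^ ℓ) :=
  stmt_7_general m k hmk p hp0 hp1
end

section
/- Let k, Δ, ℓ be natural numbers with ℓ ≤ Δ and 3Δ ≤ k, and let 0 ≤ q ≤ 1. Fix binary vectors a, b of length k, each with exactly Δ ones, with inner product ⟨a,b⟩ = ℓ. Let r be drawn uniformly at random from the set of length-k binary vectors with exactly Δ ones, and let W₁, W₂ be Bernoulli(q) random variables, with r, W₁, W₂ mutually independent. Define Y₁ = 𝟙[⟨a,r⟩ > 0] XOR W₁ and Y₂ = 𝟙[⟨b,r⟩ > 0] XOR W₂. Then P(Y₁ = 1 and Y₂ = 1) = (1−q)² − 2(1−2q)(1−q)·C(k−Δ,Δ)/C(k,Δ) + (1−2q)²·C(k−2Δ+ℓ,Δ)/C(k,Δ). -/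
/-!
Summing out the noise, `Y₁ = 1` has conditional probability `1 - q` when the test `r` meets the
support `A` of `a` and `q` when it misses it, i.e. `(1 - q) - (1 - 2q)·𝟙[r ∩ A = ∅]`; likewise for
`Y₂` and the support `B` of `b`. Expanding the product reduces the probability to counting the
weight-`Δ` tests avoiding `X = A, B, A ∪ B`, of which there are `C(k - |X|, Δ)`, and
`|A ∪ B| = 2Δ - ℓ`.
-/

open Finset

lemma sum_xor_bernoulli (q : ℝ) (x : Bool) :
    ∑ w : Bool, (if xor x w = true then (if w then q else 1 - q) else 0)
      = if x then 1 - q else q := by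
  cases x <;> simp

lemma sum_sum_ite_and_xor (q : ℝ) (P : Prop) [Decidable P] (x y : Bool) :
    ∑ w₁ : Bool, ∑ w₂ : Bool,
      (if P ∧ xor x w₁ = true ∧ xor y w₂ = true then
        (if w₁ then q else 1 - q) * (if w₂ then q else 1 - q) else 0)
      = if P then (if x then 1 - q else q) * (if y then 1 - q else q) else 0 := by
  by_cases hP : P
  · rw [if_pos hP, ← sum_xor_bernoulli q x, ← sum_xor_bernoulli q y, sum_mul_sum]
    simp only [hP, true_and, ite_zero_mul_ite_zero]
  · simp [hP]

lemma ite_mul_ite_eq_inclusion_exclusion (P Q : Prop) [Decidable P] [Decidable Q] (q : ℝ) :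
    (if P then q else 1 - q) * (if Q then q else 1 - q)
      = (1 - q) ^ 2 - (1 - 2 * q) * (1 - q) * ((if P then 1 else 0) + (if Q then 1 else 0))
        + (1 - 2 * q) ^ 2 * (if P ∧ Q then 1 else 0) := by
  split_ifs <;> simp_all <;> ring

section

variable {ι : Type*} [Fintype ι]

lemma exists_and_iff_not_disjoint (a r : ι → Bool) :
    (∃ j, a j = true ∧ r j = true) ↔
      ¬Disjoint (univ.filter fun j => a j = true) (univ.filter fun j => r j = true) := by
  simp [Finset.not_disjoint_iff]

variable [DecidableEq ι]

def boolFunEquivFinset : (ι → Bool) ≃ Finset ι where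
  toFun r := univ.filter fun j => r j = true
  invFun s j := decide (j ∈ s)
  left_inv r := by ext j; simp
  right_inv s := by ext j; simp

lemma card_powersetCard_univ_filter_disjoint (A : Finset ι) (n : ℕ) :
    #{s ∈ powersetCard n (univ : Finset ι) | Disjoint A s} = (Fintype.card ι - #A).choose n := by
  have : {s ∈ powersetCard n (univ : Finset ι) | Disjoint A s} = powersetCard n Aᶜ := by
    ext s; simp [mem_powersetCard, subset_compl_iff_disjoint_left, and_comm]
  rw [this, card_powersetCard, card_compl]

lemma sum_boolFun_ite_card_eq_sum_powersetCard {M : Type*} [AddCommMonoid M]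
    (f : Finset ι → M) (n : ℕ) :
    ∑ r : ι → Bool,
        (if #(univ.filter fun j => r j = true) = n then f (univ.filter fun j => r j = true) else 0)
      = ∑ s ∈ powersetCard n univ, f s := by
  rw [powersetCard_eq_filter, powerset_univ, sum_filter]
  exact boolFunEquivFinset.sum_comp fun s => if #s = n then f s else 0

lemma sum_powersetCard_ite_disjoint_mul (A B : Finset ι) (n : ℕ) (q : ℝ) :
    ∑ s ∈ powersetCard n univ,
      (if Disjoint A s then q else 1 - q) * (if Disjoint B s then q else 1 - q)
      = (Fintype.card ι).choose n * (1 - q) ^ 2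
        - (1 - 2 * q) * (1 - q)
          * ((Fintype.card ι - #A).choose n + (Fintype.card ι - #B).choose n)
        + (1 - 2 * q) ^ 2 * (Fintype.card ι - #(A ∪ B)).choose n := by
  simp only [ite_mul_ite_eq_inclusion_exclusion, ← disjoint_union_left, sum_add_distrib,
    sum_sub_distrib, ← mul_sum, sum_const, nsmul_eq_mul, sum_boole, card_powersetCard, card_univ,
    card_powersetCard_univ_filter_disjoint]

end

theorem stmt_12_general (k Δ ℓ : ℕ)
    (q : ℝ)
    (a b : Fin k → Bool)
    (ha : (univ.filter (fun j => a j = true)).card = Δ)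
    (hb : (univ.filter (fun j => b j = true)).card = Δ)
    (hab : (univ.filter (fun j => a j = true ∧ b j = true)).card = ℓ) :
    (∑ r : Fin k → Bool, ∑ w₁ : Bool, ∑ w₂ : Bool,
        if (univ.filter (fun j => r j = true)).card = Δ ∧
            xor (decide (∃ j, a j = true ∧ r j = true)) w₁ = true ∧
            xor (decide (∃ j, b j = true ∧ r j = true)) w₂ = true then
          (if w₁ then q else 1 - q) * (if w₂ then q else 1 - q)
        else 0) / (k.choose Δ : ℝ)
      = (1 - q) ^ 2
        - 2 * (1 - 2 * q) * (1 - q) * (((k - Δ).choose Δ : ℝ) / (k.choose Δ : ℝ))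
        + (1 - 2 * q) ^ 2 * (((k + ℓ - 2 * Δ).choose Δ : ℝ) / (k.choose Δ : ℝ)) := by
  set A := univ.filter fun j => a j = true
  set B := univ.filter fun j => b j = true
  have hunion : #(A ∪ B) + ℓ = 2 * Δ := by
    rw [← hab, filter_and, card_union_add_card_inter, ha, hb, two_mul]
  have hAB : k - #(A ∪ B) = k + ℓ - 2 * Δ := by
    have := card_le_univ (A ∪ B)
    rw [Fintype.card_fin] at this
    omega
  have hchoose : (k.choose Δ : ℝ) ≠ 0 := by
    have := card_le_univ A
    rw [Fintype.card_fin, ha] at this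
    exact_mod_cast (Nat.choose_pos this).ne'
  simp only [sum_sum_ite_and_xor, exists_and_iff_not_disjoint, decide_eq_true_eq, ite_not]
  rw [sum_boolFun_ite_card_eq_sum_powersetCard
      (fun s => (if Disjoint A s then q else 1 - q) * (if Disjoint B s then q else 1 - q)),
    sum_powersetCard_ite_disjoint_mul,
    Fintype.card_fin, ha, hb, hAB]
  field_simp
  ring

/-- single-trial success probability for the triangle-count statistic
(uniform ensemble, quantized noisy responses). `r` is uniform over the weight-`Δ`
binary vectors of length `k` (there are `C(k,Δ)` of them, whence the normalization),
`W₁, W₂` are independent Bernoulli(q), and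
`Y_t = 𝟙[⟨·, r⟩ > 0] XOR W_t`. -/
theorem stmt_12 (k Δ ℓ : ℕ) (hℓ : ℓ ≤ Δ) (hk : 3 * Δ ≤ k)
    (q : ℝ) (hq0 : 0 ≤ q) (hq1 : q ≤ 1)
    (a b : Fin k → Bool)
    (ha : (univ.filter (fun j => a j = true)).card = Δ)
    (hb : (univ.filter (fun j => b j = true)).card = Δ)
    (hab : (univ.filter (fun j => a j = true ∧ b j = true)).card = ℓ) :
    (∑ r : Fin k → Bool, ∑ w₁ : Bool, ∑ w₂ : Bool,
        if (univ.filter (fun j => r j = true)).card = Δ ∧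
            xor (decide (∃ j, a j = true ∧ r j = true)) w₁ = true ∧
            xor (decide (∃ j, b j = true ∧ r j = true)) w₂ = true then
          (if w₁ then q else 1 - q) * (if w₂ then q else 1 - q)
        else 0) / (k.choose Δ : ℝ)
      = (1 - q) ^ 2
        - 2 * (1 - 2 * q) * (1 - q) * (((k - Δ).choose Δ : ℝ) / (k.choose Δ : ℝ))
        + (1 - 2 * q) ^ 2 * (((k + ℓ - 2 * Δ).choose Δ : ℝ) / (k.choose Δ : ℝ)) :=
  stmt_12_general k Δ ℓ q a b ha hb hab
end

section
/- Let k ≥ 3 and let N_1, …, N_k be subsets of an n-element ground set such that every element belongs to at least one and at most two of the N_i, and such that for every three pairwise distinct indices p, q, r, the set N_p \ (N_q ∪ N_r) is nonempty. Then each cluster N_i is maximal: for every i and every element x ∉ N_i, there exists y ∈ N_i such that no cluster N_j contains both x and y. -/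
/-!
The clusters containing `x` avoid `i` and number at most two, so they lie inside a pair `{q, r}`
of indices different from `i`. An element of `N i \ (N q ∪ N r)` then shares no cluster with `x`.
-/

open Finset

lemma Finset.exists_pair_superset_of_card_le_two {ι : Type*} [Fintype ι] [DecidableEq ι]
    (hι : 3 ≤ Fintype.card ι) {S : Finset ι} (hS : #S ≤ 2) {i : ι} (hi : i ∉ S) :
    ∃ q r, i ≠ q ∧ i ≠ r ∧ q ≠ r ∧ S ⊆ {q, r} := by
  have hSsub : S ⊆ univ.erase i := fun j hj => mem_erase.2 ⟨ne_of_mem_of_not_mem hj hi, mem_univ j⟩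
  have hcard : 2 ≤ #(univ.erase i) := by
    rw [card_erase_of_mem (mem_univ i), card_univ]
    omega
  obtain ⟨u, hSu, hui, hu⟩ := exists_subsuperset_card_eq hSsub hS hcard
  obtain ⟨q, r, hqr, rfl⟩ := card_eq_two.1 hu
  refine ⟨q, r, ?_, ?_, hqr, hSu⟩
  · exact (ne_of_mem_erase (hui (mem_insert_self q {r}))).symm
  · exact (ne_of_mem_erase (hui (mem_insert_of_mem (mem_singleton_self r)))).symm

theorem stmt_17_general (n k : ℕ) (hk : 3 ≤ k)
    (N : Fin k → Finset (Fin n))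
    (hN2 : ∀ x : Fin n, (univ.filter (fun i => x ∈ N i)).card ≤ 2)
    (hNtriple : ∀ p q r : Fin k, p ≠ q → p ≠ r → q ≠ r →
      ∃ x : Fin n, x ∈ N p ∧ x ∉ N q ∧ x ∉ N r) :
    ∀ i : Fin k, ∀ x : Fin n, x ∉ N i →
      ∃ y ∈ N i, ∀ j : Fin k, ¬(x ∈ N j ∧ y ∈ N j) := by
  intro i x hx
  obtain ⟨q, r, hiq, hir, hqr, hxqr⟩ := exists_pair_superset_of_card_le_two (by simpa using hk)
    (hN2 x) (by simpa using hx)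
  obtain ⟨y, hy, hyq, hyr⟩ := hNtriple i q r hiq hir hqr
  refine ⟨y, hy, fun j ⟨hxj, hyj⟩ => ?_⟩
  rcases mem_insert.1 (hxqr (mem_filter.2 ⟨mem_univ j, hxj⟩)) with rfl | hj
  · exact hyq hyj
  · exact hyr (mem_singleton.1 hj ▸ hyj)

/-- Lemma (lem:maximal). Under the `Δ = 2` hypotheses, every cluster is
maximal: any element outside cluster `N i` tests negative with some element of
`N i`. -/
theorem stmt_17 (n k : ℕ) (hk : 3 ≤ k)
    (N : Fin k → Finset (Fin n))
    (hN1 : ∀ x : Fin n, 1 ≤ (univ.filter (fun i => x ∈ N i)).card)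
    (hN2 : ∀ x : Fin n, (univ.filter (fun i => x ∈ N i)).card ≤ 2)
    (hNtriple : ∀ p q r : Fin k, p ≠ q → p ≠ r → q ≠ r →
      ∃ x : Fin n, x ∈ N p ∧ x ∉ N q ∧ x ∉ N r) :
    ∀ i : Fin k, ∀ x : Fin n, x ∉ N i →
      ∃ y ∈ N i, ∀ j : Fin k, ¬(x ∈ N j ∧ y ∈ N j) :=
  stmt_17_general n k hk N hN2 hNtriple
end

section
/- Let N_1, …, N_k be subsets of an n-element ground set such that for every i the set N_i \ (⋃_{j ≠ i} N_j) is nonempty. Let Ñ_1, …, Ñ_k be any subsets of the same ground set such that for all elements u, v: (there exists i with u ∈ N_i and v ∈ N_i) if and only if (there exists i with u ∈ Ñ_i and v ∈ Ñ_i). Then there is a permutation π of {1,…,k} such that Ñ_{π(i)} = N_i for every i. -/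
/-!
Pick in each cluster `N i` an element `x i` lying in no other `N j`. If `x i ∈ M j`, then every
`u ∈ M j` is queried positively against `x i`, so `u` shares an `N`-cluster with `x i`, which can only
be `N i`: thus `M j ⊆ N i`. Hence no `M j` contains two of the private elements, so choosing for each
`i` a cluster `M (π i) ∋ x i` (the diagonal query `(x i, x i)` provides one) gives an injective, hence
bijective, `π`. Conversely every `v ∈ N i` shares some `M j = M (π i')` with `x i`, and then
`x i, x i' ∈ M (π i')` forces `i' = i`, so `N i ⊆ M (π i)`.
-/

namespace Clustering

variable {α ι : Type*}

def SameCluster (N : ι → Finset α) (u v : α) : Prop := ∃ i, u ∈ N i ∧ v ∈ N i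

def IsExclusive (N : ι → Finset α) (i : ι) (x : α) : Prop := x ∈ N i ∧ ∀ j, j ≠ i → x ∉ N j

variable {N M : ι → Finset α} {i i' j : ι} {x x' : α}

theorem IsExclusive.eq_of_mem (hx : IsExclusive N i x) (hxj : x ∈ N j) : j = i := by
  by_contra hji
  exact hx.2 j hji hxj

theorem subset_of_isExclusive_of_mem (hMN : ∀ u v, SameCluster M u v → SameCluster N u v)
    (hx : IsExclusive N i x) (hxj : x ∈ M j) : M j ⊆ N i := by
  intro u hu
  obtain ⟨l, hul, hxl⟩ := hMN u x ⟨j, hu, hxj⟩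
  rwa [hx.eq_of_mem hxl] at hul

theorem eq_of_isExclusive_of_mem (hMN : ∀ u v, SameCluster M u v → SameCluster N u v)
    (hx : IsExclusive N i x) (hx' : IsExclusive N i' x') (hxj : x ∈ M j) (hx'j : x' ∈ M j) :
    i = i' :=
  hx'.eq_of_mem (subset_of_isExclusive_of_mem hMN hx hxj hx'j)

theorem exists_perm_of_sameCluster_iff [Finite ι] (hex : ∀ i, ∃ x, IsExclusive N i x)
    (hquery : ∀ u v, SameCluster N u v ↔ SameCluster M u v) :
    ∃ π : Equiv.Perm ι, ∀ i, M (π i) = N i := by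
  choose x hx using hex
  have hMN u v := (hquery u v).mpr
  have hcover : ∀ i, ∃ j, x i ∈ M j := fun i => by
    obtain ⟨j, hj, -⟩ := (hquery (x i) (x i)).mp ⟨i, (hx i).1, (hx i).1⟩
    exact ⟨j, hj⟩
  choose π hπ using hcover
  have hπ_bij : Function.Bijective π := Finite.injective_iff_bijective.mp fun i i' h =>
    eq_of_isExclusive_of_mem hMN (hx i) (hx i') (hπ i) (h ▸ hπ i')
  refine ⟨Equiv.ofBijective π hπ_bij, fun i =>
    (subset_of_isExclusive_of_mem hMN (hx i) (hπ i)).antisymm fun v hv => ?_⟩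
  obtain ⟨j, hvj, hxj⟩ := (hquery v (x i)).mp ⟨i, hv, (hx i).1⟩
  obtain ⟨i', rfl⟩ := hπ_bij.2 j
  rwa [eq_of_isExclusive_of_mem hMN (hx i) (hx i') hxj (hπ i')]

end Clustering

/-- Theorem (thm:DeltaBigger2). If every cluster `N i` has an element
belonging exclusively to it, then any family of clusters inducing the same
same-cluster query answers (including diagonal pairs) is a permutation of the ground
truth. -/
theorem stmt_18 (n k : ℕ)
    (N M : Fin k → Finset (Fin n))
    (hex : ∀ i : Fin k, ∃ x : Fin n, x ∈ N i ∧ ∀ j : Fin k, j ≠ i → x ∉ N j)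
    (hquery : ∀ u v : Fin n,
      (∃ i, u ∈ N i ∧ v ∈ N i) ↔ (∃ i, u ∈ M i ∧ v ∈ M i)) :
    ∃ π : Equiv.Perm (Fin k), ∀ i, M (π i) = N i :=
  Clustering.exists_perm_of_sameCluster_iff hex hquery
end
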